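/- Let F be a σ-subalgebra of Σ, R = P restricted to F, and {P_ω}_{ω∈Ω} a subfield regular conditional probability for P over R (i.e., ω ↦ P_ω(E) is F-measurable and ∫_F P_ω(E) R(dω) = P(E∩F) for all F∈F, E∈Σ). Let (W_n)_{n∈ℕ} be real random variables and (K(ω))_{ω∈Ω} a family of Borel probability distributions given by an F-measurable kernel. Then (W_n) is P-conditionally i.i.d. over F with conditional distribution K(id_Ω), if and only if for R-almost all ω∈Ω the sequence (W_n) is i.i.d. under P_ω with common distribution K(ω). -/

import Mathlib

/-!
Because `{P_ω}` disintegrates `P` over `P.trim hm`, the conditional expectation of `1_E` given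
`m` is `ω ↦ P_ω(E)`, `P`-a.e. Each conditional identity (product formula, conditional law) thus
becomes an identity between `m`-measurable functions of `ω`, valid `P.trim hm`-a.e. Only countably
many of them are needed, those for finitely many rational rays `{W_n ≤ q}`, so a single null set
serves all of them; the rays form a generating π-system, so off that null set the `W_n` are
i.i.d. with law `K ω` under `P_ω`.
-/

open MeasureTheory Set

/-- Conditional independence of a family of measurable maps over a σ-algebra `F`. -/
def CondIndepFam {Ω Y I : Type*} (mΩ : MeasurableSpace Ω) (mY : MeasurableSpace Y)
    (P : Measure Ω) (F : MeasurableSpace Ω) (X : I → Ω → Y) : Prop :=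
  ∀ (n : ℕ) (idx : Fin n → I), Function.Injective idx →
    ∀ E : Fin n → Set Ω,
      (∀ j, MeasurableSet[MeasurableSpace.comap (X (idx j)) mY] (E j)) →
      P[Set.indicator (⋂ j, E j) (fun _ => (1 : ℝ)) | F]
        =ᵐ[P] fun ω => ∏ j, (P[Set.indicator (E j) (fun _ => (1 : ℝ)) | F]) ω

open scoped ENNReal
open ProbabilityTheory Function

theorem ae_eq_trim_iff_toReal_ae_eq {Ω : Type*} {m mΩ : MeasurableSpace Ω} (hm : m ≤ mΩ)
    {μ : Measure Ω} {f g : Ω → ℝ≥0∞} (hf : Measurable[m] f) (hg : Measurable[m] g)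
    (hf_top : ∀ ω, f ω ≠ ∞) (hg_top : ∀ ω, g ω ≠ ∞) :
    f =ᵐ[μ.trim hm] g ↔ (fun ω => (f ω).toReal) =ᵐ[μ] fun ω => (g ω).toReal := by
  refine ⟨fun h => ?_, fun h => ae_eq_trim_of_measurable hm hf hg ?_⟩
  · filter_upwards [ae_eq_of_ae_eq_trim h] with ω hω
    rw [hω]
  · filter_upwards [h] with ω hω
    exact (ENNReal.toReal_eq_toReal_iff' (hf_top ω) (hg_top ω)).1 hω

theorem measure_biInter_eq_prod_of_forall_fin {Ω ι : Type*} {mΩ : MeasurableSpace Ω}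
    {μ : Measure Ω} {g : ι → Set Ω}
    (h : ∀ n (idx : Fin n → ι), Injective idx → μ (⋂ j, g (idx j)) = ∏ j, μ (g (idx j)))
    (S : Finset ι) : μ (⋂ i ∈ S, g i) = ∏ i ∈ S, μ (g i) := by
  have hinj : Injective fun j => (S.equivFin.symm j : ι) :=
    Subtype.val_injective.comp S.equivFin.symm.injective
  have hinter : ⋂ i ∈ S, g i = ⋂ j, g (S.equivFin.symm j) := by
    rw [S.equivFin.symm.surjective.iInter_comp (fun i : S => g i), ← Finset.set_biInter_coe,
      biInter_eq_iInter]
    rfl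
  rw [hinter, h _ _ hinj, S.equivFin.symm.prod_comp (fun i : S => μ (g i))]
  exact S.prod_coe_sort fun i => μ (g i)

theorem ProbabilityTheory.iIndepFun_of_measure_iInter_preimage_eq_prod {Ω ι β T : Type*}
    {mΩ : MeasurableSpace Ω} [mβ : MeasurableSpace β] {μ : Measure Ω} [IsProbabilityMeasure μ]
    {W : ι → Ω → β} (hW : ∀ i, Measurable (W i)) {t : T → Set β}
    (hpi : IsPiSystem (range t)) (hgen : mβ = MeasurableSpace.generateFrom (range t))
    (h : ∀ n (idx : Fin n → ι), Injective idx → ∀ a : Fin n → T,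
      μ (⋂ j, W (idx j) ⁻¹' t (a j)) = ∏ j, μ (W (idx j) ⁻¹' t (a j))) :
    iIndepFun W μ := by
  rw [iIndepFun_iff_iIndep]
  refine iIndepSets.iIndep (fun i => (hW i).comap_le) (fun i => preimage (W i) '' range t)
    (fun i => hpi.comap (W i)) (fun i => by rw [hgen, MeasurableSpace.comap_generateFrom]) ?_
  rw [iIndepSets_iff]
  intro S f hf
  have hf' : ∀ i ∈ S, ∃ b, W i ⁻¹' t b = f i := fun i hi => by
    obtain ⟨_, ⟨b, rfl⟩, hb⟩ := hf i hi
    exact ⟨b, hb⟩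
  rcases isEmpty_or_nonempty T with hT | hT
  · obtain rfl : S = ∅ :=
      Finset.eq_empty_of_forall_notMem fun i hi => isEmptyElim (hf' i hi).choose
    simp
  choose! a ha using hf'
  rw [← iInter₂_congr ha, ← Finset.prod_congr rfl fun i hi => congrArg μ (ha i hi)]
  exact measure_biInter_eq_prod_of_forall_fin (fun n idx hinj => h n idx hinj (a ∘ idx)) S

theorem ae_iIndepFun_and_map_eq_of_Iic_rat {Ω Ω' ι : Type*} [Countable ι]
    {mΩ : MeasurableSpace Ω} {mΩ' : MeasurableSpace Ω'} {ν : Measure Ω'} {Pd : Ω' → Measure Ω}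
    [∀ ω, IsProbabilityMeasure (Pd ω)] {K : Ω' → Measure ℝ} [∀ ω, IsProbabilityMeasure (K ω)]
    {W : ι → Ω → ℝ} (hW : ∀ i, Measurable (W i))
    (hind : ∀ n (idx : Fin n → ι), Injective idx → ∀ q : Fin n → ℚ, ∀ᵐ ω ∂ν,
      Pd ω (⋂ j, W (idx j) ⁻¹' Iic (q j : ℝ)) = ∏ j, Pd ω (W (idx j) ⁻¹' Iic (q j : ℝ)))
    (hdist : ∀ i (q : ℚ), ∀ᵐ ω ∂ν, K ω (Iic (q : ℝ)) = Pd ω (W i ⁻¹' Iic (q : ℝ))) :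
    ∀ᵐ ω ∂ν, iIndepFun W (Pd ω) ∧ ∀ i, (Pd ω).map (W i) = K ω := by
  have hgen : (inferInstance : MeasurableSpace ℝ) =
      .generateFrom (range fun q : ℚ => Iic (q : ℝ)) := by
    rw [← iUnion_singleton_eq_range, ← Real.borel_eq_generateFrom_Iic_rat]
    exact BorelSpace.measurable_eq
  have hpi : IsPiSystem (range fun q : ℚ => Iic (q : ℝ)) := by
    rw [← iUnion_singleton_eq_range]
    exact Real.isPiSystem_Iic_rat
  have hind' : ∀ᵐ ω ∂ν, ∀ n (idx : Fin n → ι), Injective idx → ∀ q : Fin n → ℚ, _ :=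
    ae_all_iff.2 fun n => ae_all_iff.2 fun idx =>
      Filter.eventually_imp_distrib_left.2 fun hinj => ae_all_iff.2 (hind n idx hinj)
  have hdist' : ∀ᵐ ω ∂ν, ∀ i (q : ℚ), _ := ae_all_iff.2 fun i => ae_all_iff.2 (hdist i)
  filter_upwards [hind', hdist'] with ω hindω hdistω
  refine ⟨iIndepFun_of_measure_iInter_preimage_eq_prod hW hpi hgen hindω, fun i => ?_⟩
  refine ext_of_generate_finite _ hgen hpi ?_ ?_
  · rintro _ ⟨q, rfl⟩
    rw [Measure.map_apply (hW i) measurableSet_Iic, hdistω]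
  · simp [Measure.map_apply (hW i) MeasurableSet.univ]

/-- Conditions (sf1) and (sf2), with `R = P.trim hm`. -/
structure IsSubfieldRCP {Ω : Type*} {m mΩ : MeasurableSpace Ω}
    (hm : m ≤ mΩ) (P : Measure Ω) (Pd : Ω → Measure Ω) : Prop where
  isProbabilityMeasure (ω : Ω) : IsProbabilityMeasure (Pd ω)
  measurable_apply {E : Set Ω} : MeasurableSet E → Measurable[m] fun ω => Pd ω E
  setLIntegral_trim {E F : Set Ω} : MeasurableSet E → MeasurableSet[m] F →
    ∫⁻ ω in F, Pd ω E ∂P.trim hm = P (E ∩ F)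

namespace IsSubfieldRCP

variable {Ω : Type*} {m mΩ : MeasurableSpace Ω} {hm : m ≤ mΩ}
  {P : Measure Ω} [IsFiniteMeasure P] {Pd : Ω → Measure Ω}

theorem condExp_indicator_ae_eq (hPd : IsSubfieldRCP hm P Pd) {E : Set Ω} (hE : MeasurableSet E) :
    P[E.indicator (fun _ => (1 : ℝ)) | m] =ᵐ[P] fun ω => (Pd ω E).toReal := by
  have := hPd.isProbabilityMeasure
  have hmeas : StronglyMeasurable[m] fun ω => (Pd ω E).toReal :=
    (hPd.measurable_apply hE).ennreal_toReal.stronglyMeasurable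
  have hint : Integrable (fun ω => (Pd ω E).toReal) P :=
    .of_bound (hmeas.mono hm).aestronglyMeasurable 1 <| .of_forall fun ω => by
      rw [Real.norm_of_nonneg ENNReal.toReal_nonneg]
      exact measureReal_le_one
  refine (ae_eq_condExp_of_forall_setIntegral_eq hm ((integrable_const 1).indicator hE)
    (fun _ _ _ => hint.integrableOn) (fun s hs _ => ?_) hmeas.aestronglyMeasurable).symm
  calc ∫ ω in s, (Pd ω E).toReal ∂P
      = (∫⁻ ω in s, Pd ω E ∂P.trim hm).toReal := by
        rw [setIntegral_trim hm hmeas hs, integral_toReal (hPd.measurable_apply hE).aemeasurable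
          (.of_forall fun ω => measure_lt_top _ _)]
    _ = P.real (E ∩ s) := by rw [hPd.setLIntegral_trim hE hs, measureReal_def]
    _ = ∫ ω in s, E.indicator (fun _ => (1 : ℝ)) ω ∂P := by
        rw [setIntegral_indicator hE, setIntegral_const, smul_eq_mul, mul_one, inter_comm]

theorem toReal_ae_eq_condExp_indicator_iff (hPd : IsSubfieldRCP hm P Pd) {f : Ω → ℝ≥0∞}
    (hf : Measurable[m] f) (hf_top : ∀ ω, f ω ≠ ∞) {E : Set Ω} (hE : MeasurableSet E) :
    (fun ω => (f ω).toReal) =ᵐ[P] P[E.indicator (fun _ => (1 : ℝ)) | m] ↔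
      ∀ᵐ ω ∂P.trim hm, f ω = Pd ω E := by
  have := hPd.isProbabilityMeasure
  rw [(hPd.condExp_indicator_ae_eq hE).congr_right]
  exact (ae_eq_trim_iff_toReal_ae_eq hm hf (hPd.measurable_apply hE) hf_top
    fun ω => measure_ne_top _ _).symm

theorem condExp_indicator_iInter_ae_eq_prod_iff (hPd : IsSubfieldRCP hm P Pd) {ι : Type*}
    [Fintype ι] {E : ι → Set Ω} (hE : ∀ i, MeasurableSet (E i)) :
    (P[(⋂ i, E i).indicator (fun _ => (1 : ℝ)) | m]
        =ᵐ[P] fun ω => ∏ i, (P[(E i).indicator (fun _ => (1 : ℝ)) | m]) ω) ↔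
      ∀ᵐ ω ∂P.trim hm, Pd ω (⋂ i, E i) = ∏ i, Pd ω (E i) := by
  have := hPd.isProbabilityMeasure
  have hprod : (fun ω => ∏ i, (P[(E i).indicator (fun _ => (1 : ℝ)) | m]) ω)
      =ᵐ[P] fun ω => (∏ i, Pd ω (E i)).toReal := by
    filter_upwards [ae_all_iff.2 fun i => hPd.condExp_indicator_ae_eq (hE i)] with ω hω
    simp only [hω, ENNReal.toReal_prod]
  rw [(hPd.condExp_indicator_ae_eq (.iInter hE)).congr_left, hprod.congr_right]
  exact (ae_eq_trim_iff_toReal_ae_eq hm (hPd.measurable_apply (.iInter hE))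
    (Finset.measurable_prod _ fun i _ => hPd.measurable_apply (hE i)) (fun ω => measure_ne_top _ _)
    fun ω => ENNReal.prod_ne_top fun i _ => measure_ne_top _ _).symm

theorem condIndepFam_iff (hPd : IsSubfieldRCP hm P Pd) {ι β : Type*} [mβ : MeasurableSpace β]
    {W : ι → Ω → β} (hW : ∀ i, Measurable (W i)) :
    CondIndepFam mΩ mβ P m W ↔
      ∀ n (idx : Fin n → ι), Injective idx → ∀ E : Fin n → Set Ω,
        (∀ j, MeasurableSet[mβ.comap (W (idx j))] (E j)) →
          ∀ᵐ ω ∂P.trim hm, Pd ω (⋂ j, E j) = ∏ j, Pd ω (E j) :=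
  forall₄_congr fun _ idx _ _ => forall_congr' fun hE =>
    hPd.condExp_indicator_iInter_ae_eq_prod_iff fun j => (hW (idx j)).comap_le _ (hE j)

end IsSubfieldRCP

/-- Given a subfield regular conditional probability `{P_ω}` for `P`
over `R = P|F`, the sequence `(W_n)` is `P`-conditionally i.i.d. over `F` with
conditional distribution `K(id)` iff for `R`-almost all `ω` the sequence `(W_n)` is
i.i.d. under `P_ω` with common distribution `K(ω)`. -/
theorem subfield_rcp_mixedRenewal_iff
    {Ω : Type*} [mΩ : MeasurableSpace Ω]
    (P : Measure Ω) [IsProbabilityMeasure P]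
    (m : MeasurableSpace Ω) (hm : m ≤ mΩ)
    (Pd : Ω → @Measure Ω mΩ) (hPdprob : ∀ ω, IsProbabilityMeasure (Pd ω))
    (hPdmeas : ∀ E : Set Ω, MeasurableSet[mΩ] E → Measurable[m] fun ω => Pd ω E)
    (hPdint : ∀ (E F : Set Ω), MeasurableSet[mΩ] E → MeasurableSet[m] F →
      ∫⁻ ω in F, Pd ω E ∂(P.trim hm) = P (E ∩ F))
    (W : ℕ → Ω → ℝ) (hW : ∀ n, Measurable[mΩ] (W n))
    (K : Ω → Measure ℝ) (hKprob : ∀ ω, IsProbabilityMeasure (K ω))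
    (hKmeas : ∀ B : Set ℝ, MeasurableSet B → Measurable[m] fun ω => K ω B) :
    (CondIndepFam mΩ (inferInstance : MeasurableSpace ℝ) P m W ∧
        (∀ n n' : ℕ, ∀ F : Set Ω, MeasurableSet[m] F → ∀ B : Set ℝ, MeasurableSet B →
          P (F ∩ W n ⁻¹' B) = P (F ∩ W n' ⁻¹' B)) ∧
        ∀ (n : ℕ) (B : Set ℝ), MeasurableSet B →
          (fun ω => (K ω B).toReal)
            =ᵐ[P] P[(W n ⁻¹' B).indicator (fun _ => (1 : ℝ)) | m]) ↔
      (∀ᵐ ω ∂(P.trim hm),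
        ProbabilityTheory.iIndepFun W (Pd ω) ∧
          ∀ n : ℕ, @Measure.map Ω ℝ mΩ (inferInstance) (W n) (Pd ω) = K ω) := by
  have hPd : IsSubfieldRCP hm P Pd := ⟨hPdprob, hPdmeas _, hPdint _ _⟩
  have hK_iff : (∀ (n : ℕ) (B : Set ℝ), MeasurableSet B →
      (fun ω => (K ω B).toReal) =ᵐ[P] P[(W n ⁻¹' B).indicator (fun _ => (1 : ℝ)) | m]) ↔
      ∀ (n : ℕ) (B : Set ℝ), MeasurableSet B → ∀ᵐ ω ∂P.trim hm, K ω B = Pd ω (W n ⁻¹' B) :=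
    forall₃_congr fun n B hB => hPd.toReal_ae_eq_condExp_indicator_iff (hKmeas B hB)
      (fun ω => measure_ne_top (K ω) B) (hW n hB)
  rw [hPd.condIndepFam_iff hW, hK_iff]
  constructor
  · rintro ⟨hCI, -, hK⟩
    exact ae_iIndepFun_and_map_eq_of_Iic_rat hW
      (fun n idx hinj q => hCI n idx hinj _ fun j => ⟨_, measurableSet_Iic, rfl⟩)
      (fun n q => hK n _ measurableSet_Iic)
  · intro h
    have hKW : ∀ n B, MeasurableSet B → ∀ᵐ ω ∂P.trim hm, K ω B = Pd ω (W n ⁻¹' B) :=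
      fun n B hB => h.mono fun ω hω => by rw [← hω.2 n, Measure.map_apply (hW n) hB]
    refine ⟨fun n idx hinj E hE => h.mono fun ω hω => (hω.1.precomp hinj).meas_iInter hE,
      fun n n' F hF B hB => ?_, hKW⟩
    rw [inter_comm, ← hPd.setLIntegral_trim (hW n hB) hF, inter_comm,
      ← hPd.setLIntegral_trim (hW n' hB) hF]
    refine lintegral_congr_ae (ae_restrict_of_ae ?_)
    filter_upwards [hKW n B hB, hKW n' B hB] with ω hn hn'
    rw [← hn, ← hn']
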